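/- arXiv:2103.10032 — 4 statements merged into one kernel-verified Lean document; each statement's English description precedes it below -/
import Mathlib

section
/- A finite union of pairwise disjoint compact subsets of ℂ, each with connected complement, is polynomially convex (equivalently, has connected complement). -/
/-- A compact set `K ⊆ ℂ` is polynomially convex if for every `z ∉ K` there is a
polynomial `p` with `|p(z)| > |p(ζ)|` for all `ζ ∈ K`. -/
def PolyConvex₁ (K : Set ℂ) : Prop :=
  IsCompact K ∧ ∀ z ∉ K, ∃ p : Polynomial ℂ,
    ∀ w ∈ K, ‖Polynomial.eval w p‖ < ‖Polynomial.eval z p‖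

/-!
Polynomial convexity of a compact `M ⊆ ℂ` with connected complement comes from spectral theory:
in the closure `S` of the polynomial functions inside `C(M, ℂ)`, the coordinate function has the
same spectrum `M` as in `C(M, ℂ)` because `Mᶜ` is connected, so for `z ∉ M` the function
`w ↦ (z - w)⁻¹` is a uniform limit of polynomials `q` on `M`, and `1 - (z - X) * q` peaks
at `z`.

Connectedness of the complement of `K = ⋃ i, K i` is Borsuk's criterion. Fix `b` far from `K`
and `z ∉ K`. On each `K i` the function `(w - z) / (w - b)` has a continuous logarithm,
obtained by lifting through `exp` the homotopy `(w - z) / (w - γ t)` along a path `γ` from `z`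
to `b` in `(K i)ᶜ`; disjointness glues these logarithms. If `z` were in a bounded component `U`
of `Kᶜ`, extending the logarithm `g` to `ℂ` would make `(w - b) * exp (g w)` on `closure U` and
`w - z` elsewhere a nonvanishing continuous function on `ℂ`, which has a logarithm since `ℂ` is
simply connected; but `w - z` has none on a large circle around `z`.
-/

open Complex Metric Set Topology
open scoped Real

open Polynomial in
theorem polyConvex₁_of_isPreconnected_compl {M : Set ℂ} (hM : IsCompact M)
    (hMc : IsPreconnected Mᶜ) : PolyConvex₁ M := by
  refine ⟨hM, fun z hz => ?_⟩
  have : CompactSpace M := isCompact_iff_compactSpace.mp hM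
  let S := (polynomialFunctions M).topologicalClosure
  have : IsClosed (S : Set C(M, ℂ)) := (polynomialFunctions M).isClosed_topologicalClosure
  let x : S := ⟨(X : ℂ[X]).toContinuousMapOn M, subset_closure ⟨X, trivial, rfl⟩⟩
  have hσA : spectrum ℂ (x : C(M, ℂ)) = M := by
    rw [ContinuousMap.spectrum_eq_range]; ext; simp [x]
  have hσS : spectrum ℂ x = M :=
    (Subalgebra.spectrum_eq_of_isPreconnected_compl S x (by rwa [hσA])).trans hσA
  obtain ⟨u, hu⟩ := spectrum.notMem_iff.mp (hσS ▸ hz)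
  obtain ⟨-, ⟨q, -, rfl⟩, hq⟩ :=
    Metric.mem_closure_iff.mp (↑u⁻¹ : S).2 (‖(u : C(M, ℂ))‖ + 1)⁻¹ (by positivity)
  refine ⟨1 - (C z - X) * q, fun w hw => ?_⟩
  have hu_apply : (u : C(M, ℂ)) ⟨w, hw⟩ = z - w := by simp [hu, x]
  have hui : (u : C(M, ℂ)) * (↑u⁻¹ : S) = 1 := congrArg Subtype.val u.mul_inv
  have key : (1 - (C z - X) * q).eval w =
      ((u : C(M, ℂ)) * ((↑u⁻¹ : S) - q.toContinuousMapOn M)) ⟨w, hw⟩ := by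
    rw [mul_sub, hui]; simp [hu_apply]
  calc ‖(1 - (C z - X) * q).eval w‖
      ≤ ‖(u : C(M, ℂ))‖ * ‖(↑u⁻¹ : S) - q.toContinuousMapOn M‖ := by
        rw [key]; exact (ContinuousMap.norm_coe_le_norm _ _).trans (norm_mul_le _ _)
    _ ≤ ‖(u : C(M, ℂ))‖ * (‖(u : C(M, ℂ))‖ + 1)⁻¹ := by
        rw [← dist_eq_norm]; gcongr; exact hq.le
    _ < 1 := by rw [mul_inv_lt_iff₀ (by positivity)]; linarith
    _ = ‖(1 - (C z - X) * q).eval z‖ := by simp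

theorem Continuous.exists_continuous_exp_eq {A : Type*} [TopologicalSpace A]
    [SimplyConnectedSpace A] [LocallyPathConnectedSpace A] {f : A → ℂ} (hf : Continuous f)
    (h0 : ∀ a, f a ≠ 0) : ∃ g : A → ℂ, Continuous g ∧ ∀ a, exp (g a) = f a := by
  obtain ⟨a₀⟩ := (inferInstance : Nonempty A)
  obtain ⟨g, ⟨-, hg⟩, -⟩ := isCoveringMapOn_exp.existsUnique_continuousMap_lifts ⟨f, hf⟩
    (exp_log (h0 a₀)) h0
  exact ⟨g, g.continuous, congrFun hg⟩

theorem JoinedIn.exists_continuousOn_exp_eq_div {s : Set ℂ} {z b : ℂ} (h : JoinedIn sᶜ z b) :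
    ∃ g : ℂ → ℂ, ContinuousOn g s ∧ ∀ w ∈ s, exp (g w) = (w - z) / (w - b) := by
  classical
  let γ := h.somePath
  have hne : ∀ (t : unitInterval) (w : s), (w : ℂ) - γ t ≠ 0 := fun t w =>
    sub_ne_zero.mpr fun hw => h.somePath_mem t (hw ▸ w.2)
  let H : C(unitInterval × s, {w : ℂ // w ≠ 0}) :=
    ⟨fun p => ⟨(p.2 - z) / (p.2 - γ p.1),
        div_ne_zero (by simpa [γ] using hne 0 p.2) (hne _ _)⟩,
      (((continuous_subtype_val.comp continuous_snd).sub continuous_const).div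
        ((continuous_subtype_val.comp continuous_snd).sub (γ.continuous.comp continuous_fst))
        fun p => hne _ _).subtype_mk _⟩
  have H0 : ∀ w, H (0, w) = ⟨exp ((0 : C(s, ℂ)) w), exp_ne_zero _⟩ := fun w =>
    Subtype.ext <| by simpa [H, γ] using div_self (hne 0 w)
  let L := isCoveringMap_exp.liftHomotopy H 0 H0
  refine ⟨fun w => if hw : w ∈ s then L (1, ⟨w, hw⟩) else 0, ?_, fun w hw => ?_⟩
  · rw [continuousOn_iff_continuous_domRestrict]
    convert L.continuous.comp (Continuous.prodMk_right (1 : unitInterval)) using 1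
    ext w
    simp
  · have := congrArg Subtype.val
      (congrFun (isCoveringMap_exp.liftHomotopy_lifts H 0 H0) (1, ⟨w, hw⟩))
    simp only [dif_pos hw]
    exact this.trans (by simp [H, γ])

theorem isPreconnected_setOf_lt_norm (r : ℝ) : IsPreconnected {w : ℂ | r < ‖w‖} := by
  have : {w : ℂ | r < ‖w‖} =
      (fun p : ℝ × ℝ => (p.2 : ℂ) * exp (p.1 * I)) '' (univ ×ˢ Ioi r) := by
    ext w
    constructor
    · exact fun hw => ⟨(arg w, ‖w‖), ⟨trivial, hw⟩, norm_mul_exp_arg_mul_I w⟩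
    · rintro ⟨⟨θ, t⟩, ⟨-, ht⟩, rfl⟩
      simpa [norm_exp_ofReal_mul_I] using ht.trans_le (le_abs_self t)
  rw [this]
  exact (isPreconnected_univ.prod isPreconnected_Ioi).image _ (by fun_prop)

theorem IsOpen.frontier_connectedComponentIn_subset {α : Type*} [TopologicalSpace α]
    [LocallyConnectedSpace α] {U : Set α} (hU : IsOpen U) (x : α) :
    frontier (connectedComponentIn U x) ⊆ Uᶜ := by
  rintro y ⟨hyC, hyi⟩ hyU
  obtain ⟨w, hwy, hwx⟩ := mem_closure_iff.mp hyC _ hU.connectedComponentIn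
    (mem_connectedComponentIn hyU)
  rw [connectedComponentIn_eq hwx, ← connectedComponentIn_eq hwy] at hyi
  exact hyi (hU.connectedComponentIn.interior_eq.symm ▸ mem_connectedComponentIn hyU)

theorem exists_continuousOn_iUnion_eqOn {ι X Y : Type*} [Finite ι] [TopologicalSpace X]
    [TopologicalSpace Y] [Nonempty Y] {K : ι → Set X} (hK : ∀ i, IsClosed (K i))
    (hdisj : Pairwise (Function.onFun Disjoint K)) {g : ι → X → Y}
    (hg : ∀ i, ContinuousOn (g i) (K i)) :
    ∃ G : X → Y, ContinuousOn G (⋃ i, K i) ∧ ∀ i, EqOn G (g i) (K i) := by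
  classical
  let G x := if h : ∃ i, x ∈ K i then g h.choose x else Classical.arbitrary Y
  have hG : ∀ i, EqOn G (g i) (K i) := fun i x hx => by
    have h : ∃ j, x ∈ K j := ⟨i, hx⟩
    have hi : h.choose = i := hdisj.eq (not_disjoint_iff.mpr ⟨x, h.choose_spec, hx⟩)
    simp only [G, dif_pos h, hi]
  exact ⟨G, (locallyFinite_of_finite K).continuousOn_iUnion hK fun i => (hg i).congr (hG i), hG⟩

theorem not_exists_continuousOn_exp_eq_sub (z : ℂ) {R : ℝ} (hR : 0 < R) :
    ¬ ∃ g : ℂ → ℂ, ContinuousOn g (sphere z R) ∧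
      ∀ w ∈ sphere z R, exp (g w) = w - z := by
  rintro ⟨g, hg, hexp⟩
  let p : ℝ → ℂ := fun t => z + R * exp (t * I)
  have hp : ∀ t, p t ∈ sphere z R := fun t => by
    simp [p, norm_exp_ofReal_mul_I, abs_of_pos hR]
  -- `ψ` is a continuous logarithm of the constant `R`, so constant, yet `ψ (2π) = ψ 0 - 2πi`
  let ψ : ℝ → ℂ := fun t => g (p t) - t * I
  have hψ : Continuous ψ := (hg.comp_continuous (by fun_prop) hp).sub (by fun_prop)
  have hψR : ∀ t, exp (ψ t) = R := fun t => by
    rw [Complex.exp_sub, hexp _ (hp t)]; simp [p, exp_ne_zero]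
  have hψ_exp : ∀ t, exp (ψ t - ψ 0) = 1 := fun t => by
    rw [Complex.exp_sub, hψR, hψR, div_self (ofReal_ne_zero.mpr hR.ne')]
  have := isPreconnected_univ.constant_of_mapsTo (f := fun t => ψ t - ψ 0)
    (isDiscrete_iff_discreteTopology.mpr (NormedSpace.discreteTopology_zmultiples (2 * π * I)))
    (hψ.sub continuous_const).continuousOn
    (fun t _ => by
      obtain ⟨n, hn⟩ := exp_eq_one_iff.mp (hψ_exp t)
      exact ⟨n, by simp [hn]⟩) (mem_univ (2 * π)) (mem_univ 0)
  have hp2π : p (2 * π) = p 0 := by simp [p]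
  simp [ψ, hp2π, Real.pi_ne_zero] at this

theorem closure_connectedComponentIn_subset_closedBall {K : Set ℂ} {r : ℝ}
    (hKr : K ⊆ closedBall 0 r) {z b : ℂ} (hb : r < ‖b‖)
    (hzb : z ∉ connectedComponentIn Kᶜ b) :
    closure (connectedComponentIn Kᶜ z) ⊆ closedBall 0 r := by
  have hfar : {w : ℂ | r < ‖w‖} ⊆ connectedComponentIn Kᶜ b :=
    (isPreconnected_setOf_lt_norm r).subset_connectedComponentIn hb fun w hw hwK =>
      (mem_closedBall_zero_iff.mp (hKr hwK)).not_gt hw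
  refine closure_minimal (fun w hwz => ?_) isClosed_closedBall
  by_contra hw
  have hwb := hfar (show r < ‖w‖ by simpa using hw)
  rw [connectedComponentIn_eq hwb, ← connectedComponentIn_eq hwz] at hzb
  exact hzb (mem_connectedComponentIn (connectedComponentIn_nonempty_iff.mp ⟨w, hwz⟩))

theorem mem_connectedComponentIn_of_continuousOn_exp_eq_div {K : Set ℂ} (hK : IsClosed K)
    {r : ℝ} (hKr : K ⊆ closedBall 0 r) {z b : ℂ} (hb : r < ‖b‖) {g : ℂ → ℂ}
    (hg : ContinuousOn g K) (hexp : ∀ w ∈ K, exp (g w) = (w - z) / (w - b)) :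
    z ∈ connectedComponentIn Kᶜ b := by
  classical
  by_contra hzb
  set U := connectedComponentIn Kᶜ z
  have hUr := closure_connectedComponentIn_subset_closedBall hKr hb hzb
  have hbU : b ∉ closure U := fun h => (mem_closedBall_zero_iff.mp (hUr h)).not_gt hb
  have hz : z ∉ K := fun hzK => by simpa [exp_ne_zero] using hexp z hzK
  have hbK : b ∉ K := fun hbK => (mem_closedBall_zero_iff.mp (hKr hbK)).not_gt hb
  have hzU : z ∈ closure U := subset_closure (mem_connectedComponentIn hz)
  have hfront : frontier (closure U) ⊆ K := fun w hw => by
    simpa using hK.isOpen_compl.frontier_connectedComponentIn_subset z (frontier_closure_subset hw)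
  obtain ⟨G, hG⟩ := ContinuousMap.exists_restrict_eq hK ⟨K.domRestrict g, hg.domRestrict⟩
  have hGK : ∀ w ∈ K, exp (G w) = (w - z) / (w - b) := fun w hw => by
    rw [← hexp w hw]; exact congrArg exp (ContinuousMap.congr_fun hG ⟨w, hw⟩)
  let F := (closure U).piecewise (fun w => (w - b) * exp (G w)) (fun w => w - z)
  have hF : Continuous F := Continuous.piecewise (fun w hw => by
      have hwb : w - b ≠ 0 := sub_ne_zero.mpr fun h => hbK (h ▸ hfront hw)
      simp only [hGK w (hfront hw)]
      field_simp) (by fun_prop) (by fun_prop)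
  have hF0 : ∀ w, F w ≠ 0 := fun w => by
    by_cases hw : w ∈ closure U
    · simpa [F, hw, sub_eq_zero] using fun h : w = b => hbU (h ▸ hw)
    · simpa [F, hw, sub_eq_zero] using fun h : w = z => hw (h ▸ hzU)
  obtain ⟨L, hL, hLF⟩ := hF.exists_continuous_exp_eq hF0
  refine not_exists_continuousOn_exp_eq_sub z (R := |r| + ‖z‖ + 1) (by positivity)
    ⟨L, hL.continuousOn, fun w hw => ?_⟩
  have hwU : w ∉ closure U := fun h => by
    have h1 := mem_closedBall_zero_iff.mp (hUr h)
    have h2 := mem_sphere_iff_norm.mp hw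
    have h3 := norm_sub_le w z
    linarith [le_abs_self r]
  simp [hLF, F, hwU]

theorem isConnected_compl_iUnion_of_pairwise_disjoint {ι : Type*} [Finite ι] {K : ι → Set ℂ}
    (hcpt : ∀ i, IsCompact (K i)) (hdisj : Pairwise (Function.onFun Disjoint K))
    (hconn : ∀ i, IsConnected (K i)ᶜ) : IsConnected (⋃ i, K i)ᶜ := by
  have hK : IsCompact (⋃ i, K i) := isCompact_iUnion hcpt
  obtain ⟨r, hr⟩ := hK.isBounded.subset_closedBall 0
  set b : ℂ := ((|r| + 1 : ℝ) : ℂ)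
  have hb : r < ‖b‖ := by
    rw [norm_real, Real.norm_of_nonneg (by positivity)]
    linarith [le_abs_self r]
  have hbK : b ∉ ⋃ i, K i := fun h => (mem_closedBall_zero_iff.mp (hr h)).not_gt hb
  suffices (⋃ i, K i)ᶜ ⊆ connectedComponentIn (⋃ i, K i)ᶜ b by
    rw [this.antisymm (connectedComponentIn_subset _ _)]
    exact isConnected_connectedComponentIn_iff.mpr hbK
  intro z hz
  have hjoin : ∀ i, JoinedIn (K i)ᶜ z b := fun i =>
    ((hcpt i).isClosed.isOpen_compl.isConnected_iff_isPathConnected.mp (hconn i)).joinedIn z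
      (fun h => hz (mem_iUnion_of_mem i h)) b (fun h => hbK (mem_iUnion_of_mem i h))
  choose g hg hexp using fun i => (hjoin i).exists_continuousOn_exp_eq_div
  obtain ⟨G, hG, hGg⟩ := exists_continuousOn_iUnion_eqOn (fun i => (hcpt i).isClosed) hdisj hg
  refine mem_connectedComponentIn_of_continuousOn_exp_eq_div hK.isClosed hr hb hG fun w hw => ?_
  obtain ⟨i, hi⟩ := mem_iUnion.mp hw
  rw [hGg i hi, hexp i w hi]

/-- A finite union of pairwise disjoint compact subsets of `ℂ`, each with connected
complement, is polynomially convex, and its complement is connected. -/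
theorem polyConvex_finite_union_of_connected_compl (m : ℕ) (K : Fin m → Set ℂ)
    (hcpt : ∀ i, IsCompact (K i))
    (hdisj : Pairwise (Function.onFun Disjoint K))
    (hconn : ∀ i, IsConnected (K i)ᶜ) :
    PolyConvex₁ (⋃ i, K i) ∧ IsConnected (⋃ i, K i)ᶜ := by
  have hconn' := isConnected_compl_iUnion_of_pairwise_disjoint hcpt hdisj hconn
  exact ⟨polyConvex₁_of_isPreconnected_compl (isCompact_iUnion hcpt) hconn'.isPreconnected,
    hconn'⟩
end

section
/- Given a brick B ⊆ ℝ^d, a regular Borel measure η on ℝ^d, and δ > 0, there exists a partition of B into subbricks of diameter less than δ together with a shrinking (β̃_{i,j}) of the partition such that η of the interior of B minus the union ⋃ β̃_{i,j} is less than δ. -/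
/-!
Since `η` is finite on `B`, only countably many hyperplanes `{x | x t = c}` carry positive
`η`-mass, so in each coordinate the cut points of a fine partition can be chosen on null
hyperplanes. Shrinking every brick by `ε` and letting `ε → 0`, the open sets
`(B \ ⋃ β̃)°` decrease to a subset of the union of these cut hyperplanes, so their measures tend
to `0` by continuity from above.
-/

open MeasureTheory Set Filter Topology

lemma exists_fine_partition_avoiding {C : Set ℝ} (hC : C.Countable) {δ : ℝ} (hδ : 0 < δ)
    {a b : ℝ} (hab : a < b) :
    ∃ (N : ℕ) (f : ℕ → ℝ), f 0 = a ∧ f (N + 1) = b ∧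
      (∀ i ≤ N, f i < f (i + 1) ∧ f (i + 1) - f i < δ) ∧ ∀ i ∈ Finset.Icc 1 N, f i ∉ C := by
  obtain ⟨n, hn⟩ := exists_nat_gt ((b - a) / (δ / 2))
  rw [div_lt_iff₀ (half_pos hδ)] at hn
  induction n generalizing a with
  | zero => simp only [CharP.cast_eq_zero, zero_mul] at hn; linarith
  | succ n ih =>
    by_cases hshort : b - a < δ
    · refine ⟨0, fun i => a + i * (b - a), by simp, by simp, fun i hi => ?_, by simp⟩
      obtain rfl : i = 0 := Nat.le_zero.1 hi
      simp only [Nat.cast_zero, zero_add, Nat.cast_one]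
      constructor <;> linarith
    -- otherwise cut off a piece of length between `δ / 2` and `δ` at a point outside `C`
    obtain ⟨c, hcC, hac, hca⟩ :=
      (hC.dense_compl ℝ).exists_between (show a + δ / 2 < a + δ by linarith)
    obtain ⟨N, f, hf0, hfN, hgap, havoid⟩ :=
      ih (show c < b by linarith) (by push_cast at hn; linarith)
    refine ⟨N + 1, fun | 0 => a | k + 1 => f k, rfl, hfN, fun i hi => ?_, fun i hi => ?_⟩
    · rcases i with _ | k
      · simp only [hf0]
        constructor <;> linarith
      · exact hgap k (by omega)
    · rcases i with _ | _ | k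
      · simp at hi
      · simpa [hf0] using hcC
      · exact havoid (k + 1) (by rw [Finset.mem_Icc] at hi ⊢; omega)

lemma exists_mem_Ioo_of_forall_ne {α : Type*} [LinearOrder α] {f : ℕ → α} {x : α} :
    ∀ {N : ℕ}, x ∈ Ioo (f 0) (f (N + 1)) → (∀ i ∈ Finset.Icc 1 N, x ≠ f i) →
      ∃ i ≤ N, x ∈ Ioo (f i) (f (i + 1))
  | 0, hx, _ => ⟨0, le_rfl, hx⟩
  | N + 1, hx, hne => by
    rcases lt_or_ge x (f (N + 1)) with hlt | hge
    · obtain ⟨i, hi, hxi⟩ := exists_mem_Ioo_of_forall_ne (N := N) ⟨hx.1, hlt⟩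
        fun i hi => hne i (Finset.Icc_subset_Icc_right N.le_succ hi)
      exact ⟨i, hi.trans N.le_succ, hxi⟩
    · exact ⟨N + 1, le_rfl, (hge.lt_of_ne' (hne (N + 1) (by simp))), hx.2⟩

lemma Metric.diam_setOf_forall_mem_Icc_le {ι : Type*} [Fintype ι] {lo hi : ι → ℝ} {c : ℝ}
    (hc : 0 ≤ c) (h : ∀ t, hi t - lo t ≤ c) :
    Metric.diam {x : ι → ℝ | ∀ t, lo t ≤ x t ∧ x t ≤ hi t} ≤ c :=
  Metric.diam_le_of_forall_dist_le hc fun _ hx _ hy =>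
    (dist_pi_le_iff hc).2 fun t => (Real.dist_le_of_mem_Icc (hx t) (hy t)).trans (h t)

section Grid

variable {d : ℕ} {a b : Fin d → ℝ} {r : Fin d → ℕ} {lam : Fin d → ℕ → ℝ}

def shrunkBrick (lam : Fin d → ℕ → ℝ) (i : Fin d → ℕ) (ε : ℝ) : Set (Fin d → ℝ) :=
  {x | ∀ t, lam t (i t) + ε ≤ x t ∧ x t ≤ lam t (i t + 1) - ε}

lemma shrunkBrick_antitone (i : Fin d → ℕ) : Antitone (shrunkBrick lam i) :=
  fun _ _ hε _ hx t => ⟨by linarith [(hx t).1], by linarith [(hx t).2]⟩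

lemma eventually_mem_shrunkBrick {ε : ℕ → ℝ} (hε : Tendsto ε atTop (𝓝 0)) {x : Fin d → ℝ}
    {j : Fin d → ℕ} (hx : ∀ t, x t ∈ Ioo (lam t (j t)) (lam t (j t + 1))) :
    ∀ᶠ n in atTop, x ∈ shrunkBrick lam j (ε n) := by
  refine eventually_all.2 fun t => ?_
  filter_upwards [hε.eventually_le_const (sub_pos.2 (hx t).1),
    hε.eventually_le_const (sub_pos.2 (hx t).2)] with n h₁ h₂
  constructor <;> linarith

lemma iInter_interior_diff_shrunkBrick_subset (h0 : ∀ t, lam t 0 = a t)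
    (htop : ∀ t, lam t (r t + 1) = b t) {ε : ℕ → ℝ} (hε : Tendsto ε atTop (𝓝 0)) :
    ⋂ n, interior (Icc a b \ ⋃ i ∈ {i : Fin d → ℕ | ∀ t, i t ≤ r t}, shrunkBrick lam i (ε n)) ⊆
      ⋃ t, ⋃ i ∈ Finset.Icc 1 (r t), {x | x t = lam t i} := by
  intro x hx
  by_contra hxH
  rw [mem_iInter] at hx
  have hbox : x ∈ univ.pi fun t => Ioo (a t) (b t) := by
    simpa only [← pi_univ_Icc, interior_pi_set finite_univ, interior_Icc]
      using interior_mono sdiff_subset (hx 0)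
  have hgap (t : Fin d) : ∃ j ≤ r t, x t ∈ Ioo (lam t j) (lam t (j + 1)) :=
    exists_mem_Ioo_of_forall_ne (by simpa only [h0, htop] using hbox t (mem_univ t))
      fun i hi hxi => hxH (mem_iUnion.2 ⟨t, mem_iUnion₂.2 ⟨i, hi, hxi⟩⟩)
  choose j hj hxj using hgap
  obtain ⟨n, hn⟩ := (eventually_mem_shrunkBrick hε hxj).exists
  exact (interior_subset (hx n)).2 (mem_biUnion hj hn)

lemma tendsto_measure_interior_diff_shrunkBrick (η : Measure (Fin d → ℝ))
    [IsFiniteMeasureOnCompacts η] (h0 : ∀ t, lam t 0 = a t) (htop : ∀ t, lam t (r t + 1) = b t)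
    (hnull : ∀ t, ∀ i ∈ Finset.Icc 1 (r t), η {x | x t = lam t i} = 0) {ε : ℕ → ℝ}
    (hε_anti : Antitone ε) (hε : Tendsto ε atTop (𝓝 0)) :
    Tendsto (fun n => η (interior (Icc a b \
      ⋃ i ∈ {i : Fin d → ℕ | ∀ t, i t ≤ r t}, shrunkBrick lam i (ε n)))) atTop (𝓝 0) := by
  have hanti : Antitone fun n => interior (Icc a b \
      ⋃ i ∈ {i : Fin d → ℕ | ∀ t, i t ≤ r t}, shrunkBrick lam i (ε n)) := fun m n hmn =>
    interior_mono <| sdiff_subset_sdiff_right <|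
      iUnion₂_mono fun i _ => shrunkBrick_antitone i (hε_anti hmn)
  have hlim := tendsto_measure_iInter_atTop (μ := η)
    (fun n => isOpen_interior.measurableSet.nullMeasurableSet) hanti
    ⟨0, (measure_mono (interior_subset.trans sdiff_subset)).trans_lt
      isCompact_Icc.measure_lt_top |>.ne⟩
  have hH : η (⋃ t, ⋃ i ∈ Finset.Icc 1 (r t), {x : Fin d → ℝ | x t = lam t i}) = 0 :=
    measure_iUnion_null fun t => measure_biUnion_null_iff (Finset.countable_toSet _) |>.2 (hnull t)
  rwa [measure_mono_null (iInter_interior_diff_shrunkBrick_subset h0 htop hε) hH] at hlim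

end Grid

/-- Given a brick `B = Icc a b ⊆ ℝ^d`, a regular Borel measure `η`, and `δ > 0`, there is a
grid partition of `B` into subbricks of diameter `< δ` and a shrinking `(β̃_i)` of the
partition with `η((B \ ⋃ β̃_i)°) < δ`. -/
theorem exists_fine_stratification (d : ℕ) (a b : Fin d → ℝ) (hab : ∀ t, a t < b t)
    (η : Measure (Fin d → ℝ)) [η.Regular] (δ : ℝ) (hδ : 0 < δ) :
    ∃ (r : Fin d → ℕ) (lam lam' lam'' : Fin d → ℕ → ℝ),
      (∀ t, lam t 0 = a t) ∧ (∀ t, lam t (r t + 1) = b t) ∧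
      (∀ t, ∀ i ≤ r t, lam t i < lam t (i + 1)) ∧
      (∀ t, ∀ i ≤ r t,
        lam t i < lam' t i ∧ lam' t i ≤ lam'' t (i + 1) ∧ lam'' t (i + 1) < lam t (i + 1)) ∧
      (∀ i : Fin d → ℕ, (∀ t, i t ≤ r t) →
        Metric.diam {x : Fin d → ℝ | ∀ t, lam t (i t) ≤ x t ∧ x t ≤ lam t (i t + 1)} < δ) ∧
      η (interior (Set.Icc a b \
        ⋃ i ∈ {i : Fin d → ℕ | ∀ t, i t ≤ r t},
          {x : Fin d → ℝ | ∀ t, lam' t (i t) ≤ x t ∧ x t ≤ lam'' t (i t + 1)}))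
        < ENNReal.ofReal δ := by
  have hcount (t : Fin d) : {c | 0 < η {x | x t = c}}.Countable :=
    Measure.countable_meas_level_set_pos (measurable_pi_apply t)
  choose r lam h0 htop hgap havoid using
    fun t => exists_fine_partition_avoiding (hcount t) (half_pos hδ) (hab t)
  set ε : ℕ → ℝ := fun n => 1 / (n + 1)
  have hε : Tendsto ε atTop (𝓝 0) := tendsto_one_div_add_atTop_nhds_zero_nat
  have hε_anti : Antitone ε := fun m n hmn => Nat.one_div_le_one_div hmn
  have hleft := tendsto_measure_interior_diff_shrunkBrick η h0 htop
    (fun t i hi => nonpos_iff_eq_zero.1 (not_lt.1 (havoid t i hi))) hε_anti hε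
  have hthin : ∀ᶠ n in atTop, ∀ t, ∀ i ≤ r t, 2 * ε n < lam t (i + 1) - lam t i :=
    eventually_all.2 fun t => (finite_Iic (r t)).eventually_all.2 fun i hi =>
      (by simpa using hε.const_mul 2 : Tendsto (2 * ε ·) atTop (𝓝 0)).eventually_lt_const
        (sub_pos.2 (hgap t i hi).1)
  obtain ⟨n, hn_thin, hn_small⟩ :=
    (hthin.and (hleft.eventually_lt_const (ENNReal.ofReal_pos.2 hδ))).exists
  have hεn : 0 < ε n := by positivity
  refine ⟨r, lam, fun t i => lam t i + ε n, fun t i => lam t i - ε n, h0, htop,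
    fun t i hi => (hgap t i hi).1, fun t i hi => ?_, fun i hi => ?_, hn_small⟩
  · have := hn_thin t i hi
    exact ⟨by linarith, by linarith, by linarith⟩
  · exact (Metric.diam_setOf_forall_mem_Icc_le (half_pos hδ).le
      fun t => (hgap t (i t) (hi t)).2.le).trans_lt (half_lt_self hδ)
end

section
/- The serpentine tiling by reflected bricks covers ℝ^d: starting from any brick B_1 ⊆ ℝ^d, and inductively defining B_{k+1} as the reflection of the brick B_1 ∪ ⋯ ∪ B_k in its face whose outward normal points in the k-th direction (directions cycling through +e_1, −e_1, +e_2, −e_2, …, +e_d, −e_d), the interiors of the B_k are pairwise disjoint and ⋃_k B_k = ℝ^d. -/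
/-- The serpentine tiling by reflected bricks covers `ℝ^d`.  The cumulative brick after `k`
reflections is `Icc (A k) (B k)`; at step `k` the cumulative brick is reflected in its face
whose outward normal is the `k`-th signed coordinate direction (cycling through
`+e_1, −e_1, …, +e_d, −e_d`), `tile (k+1)` being the reflected copy.  Then the interiors of
the tiles are pairwise disjoint and the tiles cover `ℝ^d`. -/
theorem serpentine_tiling_covers (d : ℕ) (hd : 0 < d)
    (A B : ℕ → Fin d → ℝ) (tile : ℕ → Set (Fin d → ℝ))
    (h0 : ∀ t, A 0 t < B 0 t)
    (hstep : ∀ k, ∀ t : Fin d, (t : ℕ) = (k % (2 * d)) / 2 →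
      if k % 2 = 0 then
        A (k + 1) = A k ∧
        B (k + 1) = Function.update (B k) t (2 * B k t - A k t)
      else
        B (k + 1) = B k ∧
        A (k + 1) = Function.update (A k) t (2 * A k t - B k t))
    (htile0 : tile 0 = Set.Icc (A 0) (B 0))
    (htile : ∀ k, ∀ t : Fin d, (t : ℕ) = (k % (2 * d)) / 2 →
      if k % 2 = 0 then
        tile (k + 1) = Set.Icc (Function.update (A k) t (B k t)) (B (k + 1))
      else
        tile (k + 1) = Set.Icc (A (k + 1)) (Function.update (B k) t (A k t))) :
    (∀ j k, j ≠ k → interior (tile j) ∩ interior (tile k) = ∅) ∧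
    (⋃ k, tile k) = Set.univ := by
  classical
  have h2d : 0 < 2 * d := by omega
  have htlt : ∀ k : ℕ, (k % (2 * d)) / 2 < d := by
    intro k
    have := Nat.mod_lt k h2d
    omega
  set T : ℕ → Fin d := fun k => ⟨(k % (2 * d)) / 2, htlt k⟩ with hT
  -- strict inequality A < B, for all times
  have hlt : ∀ k s, A k s < B k s := by
    intro k
    induction k with
    | zero => exact h0
    | succ k ih =>
      intro s
      have hstep' := hstep k (T k) rfl
      by_cases hk : k % 2 = 0
      · rw [if_pos hk] at hstep'
        obtain ⟨hA, hB⟩ := hstep'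
        rw [hA, hB]
        by_cases hs : s = T k
        · subst hs
          rw [Function.update_self]
          linarith [ih (T k)]
        · rw [Function.update_of_ne hs]; exact ih s
      · rw [if_neg hk] at hstep'
        obtain ⟨hB, hA⟩ := hstep'
        rw [hA, hB]
        by_cases hs : s = T k
        · subst hs
          rw [Function.update_self]
          linarith [ih (T k)]
        · rw [Function.update_of_ne hs]; exact ih s
  -- one-step monotonicity
  have hAle : ∀ k s, A (k + 1) s ≤ A k s := by
    intro k s
    have hstep' := hstep k (T k) rfl
    by_cases hk : k % 2 = 0
    · rw [if_pos hk] at hstep'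
      rw [hstep'.1]
    · rw [if_neg hk] at hstep'
      rw [hstep'.2]
      by_cases hs : s = T k
      · subst hs; rw [Function.update_self]; linarith [hlt k (T k)]
      · rw [Function.update_of_ne hs]
  have hBle : ∀ k s, B k s ≤ B (k + 1) s := by
    intro k s
    have hstep' := hstep k (T k) rfl
    by_cases hk : k % 2 = 0
    · rw [if_pos hk] at hstep'
      rw [hstep'.2]
      by_cases hs : s = T k
      · subst hs; rw [Function.update_self]; linarith [hlt k (T k)]
      · rw [Function.update_of_ne hs]
    · rw [if_neg hk] at hstep'
      rw [hstep'.1]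
  have hBmono : ∀ s, Monotone fun k => B k s :=
    fun s => monotone_nat_of_le_succ (fun k => hBle k s)
  have hAanti : ∀ s, Antitone fun k => A k s :=
    fun s => antitone_nat_of_succ_le (fun k => hAle k s)
  have hIccMono : ∀ j k, j ≤ k → Set.Icc (A j) (B j) ⊆ Set.Icc (A k) (B k) := by
    intro j k hjk
    apply Set.Icc_subset_Icc
    · intro s; exact hAanti s hjk
    · intro s; exact hBmono s hjk
  -- tiles sit inside the cumulative brick
  have hTileSub : ∀ k, tile k ⊆ Set.Icc (A k) (B k) := by
    intro k
    match k with
    | 0 => rw [htile0]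
    | k + 1 =>
      have htile' := htile k (T k) rfl
      have hstep' := hstep k (T k) rfl
      by_cases hk : k % 2 = 0
      · rw [if_pos hk] at htile' hstep'
        rw [htile', hstep'.1]
        apply Set.Icc_subset_Icc _ le_rfl
        intro s
        by_cases hs : s = T k
        · subst hs; rw [Function.update_self]; exact (hlt k (T k)).le
        · rw [Function.update_of_ne hs]
      · rw [if_neg hk] at htile' hstep'
        rw [htile', hstep'.1]
        apply Set.Icc_subset_Icc le_rfl
        intro s
        by_cases hs : s = T k
        · subst hs; rw [Function.update_self]; exact (hlt k (T k)).le
        · rw [Function.update_of_ne hs]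
  -- cumulative brick is covered by tiles
  have hCover : ∀ k, Set.Icc (A k) (B k) ⊆ ⋃ j, tile j := by
    intro k
    induction k with
    | zero => rw [← htile0]; exact Set.subset_iUnion tile 0
    | succ k ih =>
      have htile' := htile k (T k) rfl
      have hstep' := hstep k (T k) rfl
      intro x hx
      obtain ⟨hx1, hx2⟩ := hx
      by_cases hk : k % 2 = 0
      · rw [if_pos hk] at htile' hstep'
        obtain ⟨hA, hB⟩ := hstep'
        by_cases hxt : x (T k) ≤ B k (T k)
        · apply ih
          constructor
          · intro s; have := hx1 s; rwa [hA] at this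
          · intro s
            by_cases hs : s = T k
            · subst hs; exact hxt
            · have := hx2 s; rwa [hB, Function.update_of_ne hs] at this
        · apply Set.mem_iUnion.mpr ⟨k + 1, ?_⟩
          rw [htile']
          constructor
          · intro s
            by_cases hs : s = T k
            · subst hs; rw [Function.update_self]; linarith
            · rw [Function.update_of_ne hs]
              have := hx1 s; rwa [hA] at this
          · exact hx2
      · rw [if_neg hk] at htile' hstep'
        obtain ⟨hB, hA⟩ := hstep'
        by_cases hxt : A k (T k) ≤ x (T k)
        · apply ih
          constructor
          · intro s
            by_cases hs : s = T k
            · subst hs; exact hxt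
            · have := hx1 s; rwa [hA, Function.update_of_ne hs] at this
          · intro s; have := hx2 s; rwa [hB] at this
        · apply Set.mem_iUnion.mpr ⟨k + 1, ?_⟩
          rw [htile']
          constructor
          · exact hx1
          · intro s
            by_cases hs : s = T k
            · subst hs; rw [Function.update_self]; linarith
            · rw [Function.update_of_ne hs]
              have := hx2 s; rwa [hB] at this
  -- interior of a box
  have hint : ∀ a b : Fin d → ℝ,
      interior (Set.Icc a b) = Set.pi Set.univ fun s => Set.Ioo (a s) (b s) := by
    intro a b
    rw [← Set.pi_univ_Icc, interior_pi_set Set.finite_univ]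
    simp [interior_Icc]
  -- interior of the new tile misses the previous cumulative brick
  have hdisj1 : ∀ k, interior (tile (k + 1)) ∩ Set.Icc (A k) (B k) = ∅ := by
    intro k
    have htile' := htile k (T k) rfl
    apply Set.eq_empty_iff_forall_notMem.mpr
    rintro x ⟨hx1, hx2⟩
    by_cases hk : k % 2 = 0
    · rw [if_pos hk] at htile'
      rw [htile', hint] at hx1
      have := (hx1 (T k) (Set.mem_univ _)).1
      rw [Function.update_self] at this
      exact absurd (hx2.2 (T k)) (by linarith)
    · rw [if_neg hk] at htile'
      rw [htile', hint] at hx1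
      have := (hx1 (T k) (Set.mem_univ _)).2
      rw [Function.update_self] at this
      exact absurd (hx2.1 (T k)) (by linarith)
  have hdisj : ∀ j k, j < k → interior (tile j) ∩ interior (tile k) = ∅ := by
    intro j k hjk
    obtain ⟨m, rfl⟩ : ∃ m, k = m + 1 := ⟨k - 1, by omega⟩
    apply Set.eq_empty_iff_forall_notMem.mpr
    rintro x ⟨hx1, hx2⟩
    have hxj : x ∈ Set.Icc (A m) (B m) :=
      hIccMono j m (by omega) (hTileSub j (interior_subset hx1))
    exact Set.eq_empty_iff_forall_notMem.mp (hdisj1 m) x ⟨hx2, hxj⟩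
  constructor
  · intro j k hjk
    rcases lt_or_gt_of_ne hjk with h | h
    · exact hdisj j k h
    · rw [Set.inter_comm]; exact hdisj k j h
  -- covering: the bricks grow without bound in every coordinate
  · have hBgrow : ∀ (s : Fin d) (n : ℕ),
        B 0 s + n * (B 0 s - A 0 s) ≤ B (2 * (s : ℕ) + 2 * d * n) s := by
      intro s n
      induction n with
      | zero => simpa using hBmono s (Nat.zero_le _)
      | succ n ih =>
        set k := 2 * (s : ℕ) + 2 * d * n with hk
        have hsd := s.isLt
        have hmod : k % (2 * d) = 2 * (s : ℕ) := by
          rw [hk, Nat.add_mul_mod_self_left]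
          exact Nat.mod_eq_of_lt (by omega)
        have hts : (s : ℕ) = (k % (2 * d)) / 2 := by rw [hmod]; omega
        have hkeven : k % 2 = 0 := by
          have h2 : k = 2 * ((s : ℕ) + d * n) := by rw [hk]; ring
          omega
        have hstep' := hstep k s hts
        rw [if_pos hkeven] at hstep'
        have hB1 : B (k + 1) s = 2 * B k s - A k s := by
          rw [hstep'.2, Function.update_self]
        have hw : B 0 s - A 0 s ≤ B k s - A k s := by
          have h1 := hAanti s (Nat.zero_le k)
          have h2 := hBmono s (Nat.zero_le k)
          simp only at h1 h2
          linarith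
        have hmono : B (k + 1) s ≤ B (2 * (s : ℕ) + 2 * d * (n + 1)) s := by
          apply hBmono s
          have h2 : 2 * (s : ℕ) + 2 * d * (n + 1) = k + 2 * d := by rw [hk]; ring
          omega
        push_cast
        have : B 0 s + n * (B 0 s - A 0 s) + (B 0 s - A 0 s) ≤ B (k + 1) s := by
          rw [hB1]; linarith
        linarith
    have hAgrow : ∀ (s : Fin d) (n : ℕ),
        A (2 * (s : ℕ) + 1 + 2 * d * n) s ≤ A 0 s - n * (B 0 s - A 0 s) := by
      intro s n
      induction n with
      | zero => simpa using hAanti s (Nat.zero_le _)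
      | succ n ih =>
        set k := 2 * (s : ℕ) + 1 + 2 * d * n with hk
        have hsd := s.isLt
        have hmod : k % (2 * d) = 2 * (s : ℕ) + 1 := by
          rw [hk, Nat.add_mul_mod_self_left]
          exact Nat.mod_eq_of_lt (by omega)
        have hts : (s : ℕ) = (k % (2 * d)) / 2 := by rw [hmod]; omega
        have hkodd : ¬ k % 2 = 0 := by
          have h2 : k = 2 * ((s : ℕ) + d * n) + 1 := by rw [hk]; ring
          omega
        have hstep' := hstep k s hts
        rw [if_neg hkodd] at hstep'
        have hA1 : A (k + 1) s = 2 * A k s - B k s := by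
          rw [hstep'.2, Function.update_self]
        have hw : B 0 s - A 0 s ≤ B k s - A k s := by
          have h1 := hAanti s (Nat.zero_le k)
          have h2 := hBmono s (Nat.zero_le k)
          simp only at h1 h2
          linarith
        have hmono : A (2 * (s : ℕ) + 1 + 2 * d * (n + 1)) s ≤ A (k + 1) s := by
          apply hAanti s
          have h2 : 2 * (s : ℕ) + 1 + 2 * d * (n + 1) = k + 2 * d := by rw [hk]; ring
          omega
        push_cast
        have : A (k + 1) s ≤ A 0 s - n * (B 0 s - A 0 s) - (B 0 s - A 0 s) := by
          rw [hA1]; linarith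
        linarith
    apply Set.eq_univ_iff_forall.mpr
    intro x
    have hex : ∀ s : Fin d, ∃ k, A k s ≤ x s ∧ x s ≤ B k s := by
      intro s
      have hw0 : 0 < B 0 s - A 0 s := by linarith [h0 s]
      obtain ⟨n1, hn1⟩ := Archimedean.arch (x s - B 0 s) hw0
      obtain ⟨n2, hn2⟩ := Archimedean.arch (A 0 s - x s) hw0
      rw [nsmul_eq_mul] at hn1 hn2
      set n := max n1 n2 with hn
      refine ⟨2 * (s : ℕ) + 1 + 2 * d * n, ?_, ?_⟩
      · have := hAgrow s n
        have hcast : (n2 : ℝ) ≤ (n : ℝ) := by exact_mod_cast Nat.le_max_right n1 n2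
        nlinarith
      · have h1 := hBgrow s n
        have h2 := hBmono s (show 2 * (s : ℕ) + 2 * d * n ≤ 2 * (s : ℕ) + 1 + 2 * d * n by omega)
        simp only at h2
        have hcast : (n1 : ℝ) ≤ (n : ℝ) := by exact_mod_cast Nat.le_max_left n1 n2
        nlinarith
    choose K hK using hex
    set N := Finset.univ.sup K with hN
    have hxN : x ∈ Set.Icc (A N) (B N) := by
      constructor
      · intro s
        have hle : K s ≤ N := Finset.le_sup (Finset.mem_univ s)
        exact le_trans (hAanti s hle) (hK s).1
      · intro s
        have hle : K s ≤ N := Finset.le_sup (Finset.mem_univ s)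
        exact le_trans (hK s).2 (hBmono s hle)
    exact hCover N hxN
end

section
/- In the serpentine tiling construction in ℝ^d starting from a brick containing 0 in its interior, after each full cycle of 2d reflections every coordinate extent at least doubles: writing ⋃_{j≤k} B_j = ∏_t [a_t^{(k)}, b_t^{(k)}], one has a_t^{(j·2d)} < −2^j b_t^{(1)} and b_t^{(j·2d)} > 2^j b_t^{(1)} for all j ≥ 1 (and similarly for all coordinates), so a_t^{(k)} → −∞ and b_t^{(k)} → +∞ as k → ∞. -/
open Filter

/-- In the serpentine tiling construction starting from a brick with `0` in its interior,
after each full cycle of `2d` reflections every coordinate extent at least doubles: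
writing the cumulative brick as `∏_t [A k t, B k t]`, one has
`A (j·2d) t < −2^j · B 0 t` and `B (j·2d) t > 2^j · B 0 t` for all `j ≥ 1`, so
`A k t → −∞` and `B k t → +∞` as `k → ∞`. -/
theorem serpentine_doubling (d : ℕ) (hd : 0 < d)
    (A B : ℕ → Fin d → ℝ)
    (h0 : ∀ t, A 0 t < 0 ∧ 0 < B 0 t)
    (hstep : ∀ k, ∀ t : Fin d, (t : ℕ) = (k % (2 * d)) / 2 →
      if k % 2 = 0 then
        A (k + 1) = A k ∧
        B (k + 1) = Function.update (B k) t (2 * B k t - A k t)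
      else
        B (k + 1) = B k ∧
        A (k + 1) = Function.update (A k) t (2 * A k t - B k t)) :
    (∀ j : ℕ, 1 ≤ j → ∀ t,
      A (j * (2 * d)) t < -(2 ^ j * B 0 t) ∧ 2 ^ j * B 0 t < B (j * (2 * d)) t) ∧
    (∀ t, Tendsto (fun k => A k t) atTop atBot) ∧
    (∀ t, Tendsto (fun k => B k t) atTop atTop) := by
  have hd2 : 0 < 2 * d := by omega
  have key : ∀ k, ∃ t : Fin d, (t : ℕ) = (k % (2 * d)) / 2 := by
    intro k
    refine ⟨⟨(k % (2 * d)) / 2, ?_⟩, rfl⟩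
    have := Nat.mod_lt k hd2
    omega
  -- positivity invariant
  have pos : ∀ k t, A k t < 0 ∧ 0 < B k t := by
    intro k
    induction k with
    | zero => exact h0
    | succ k ih =>
      obtain ⟨t0, ht0⟩ := key k
      have hs := hstep k t0 ht0
      intro t
      by_cases hk : k % 2 = 0
      · rw [if_pos hk] at hs
        obtain ⟨hA, hB⟩ := hs
        rw [hA, hB]
        by_cases ht : t = t0
        · subst ht
          simp only [Function.update_self]
          exact ⟨(ih t).1, by linarith [(ih t).1, (ih t).2]⟩
        · rw [Function.update_of_ne ht]
          exact ih t
      · rw [if_neg hk] at hs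
        obtain ⟨hB, hA⟩ := hs
        rw [hA, hB]
        by_cases ht : t = t0
        · subst ht
          simp only [Function.update_self]
          exact ⟨by linarith [(ih t).1, (ih t).2], (ih t).2⟩
        · rw [Function.update_of_ne ht]
          exact ih t
  -- monotonicity
  have mono : ∀ k t, A (k + 1) t ≤ A k t ∧ B k t ≤ B (k + 1) t := by
    intro k t
    obtain ⟨t0, ht0⟩ := key k
    have hs := hstep k t0 ht0
    by_cases hk : k % 2 = 0
    · rw [if_pos hk] at hs
      obtain ⟨hA, hB⟩ := hs
      rw [hA, hB]
      by_cases ht : t = t0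
      · subst ht
        simp only [Function.update_self]
        exact ⟨le_refl _, by linarith [(pos k t).1, (pos k t).2]⟩
      · rw [Function.update_of_ne ht]
        exact ⟨le_refl _, le_refl _⟩
    · rw [if_neg hk] at hs
      obtain ⟨hB, hA⟩ := hs
      rw [hA, hB]
      by_cases ht : t = t0
      · subst ht
        simp only [Function.update_self]
        exact ⟨by linarith [(pos k t).1, (pos k t).2], le_refl _⟩
      · rw [Function.update_of_ne ht]
        exact ⟨le_refl _, le_refl _⟩
  have monoA : ∀ t : Fin d, Antitone (fun k => A k t) := fun t =>
    antitone_nat_of_succ_le (fun k => (mono k t).1)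
  have monoB : ∀ t : Fin d, Monotone (fun k => B k t) := fun t =>
    monotone_nat_of_le_succ (fun k => (mono k t).2)
  -- one full cycle at least doubles every coordinate
  have cycle : ∀ j (t : Fin d),
      2 * B (j * (2 * d)) t < B ((j + 1) * (2 * d)) t ∧
      A ((j + 1) * (2 * d)) t < -(2 * B (j * (2 * d)) t) := by
    intro j t
    have htd : (t : ℕ) < d := t.isLt
    set m := j * (2 * d) with hm
    set k1 := m + 2 * (t : ℕ) with hk1
    have hk1eq : k1 = 2 * (t : ℕ) + (2 * d) * j := by rw [hk1, hm]; ring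
    have hmod1 : k1 % (2 * d) = 2 * (t : ℕ) := by
      rw [hk1eq, Nat.add_mul_mod_self_left, Nat.mod_eq_of_lt (by omega)]
    have ht1 : (t : ℕ) = (k1 % (2 * d)) / 2 := by rw [hmod1]; omega
    have hk1even : k1 % 2 = 0 := by
      have : k1 = 2 * ((t : ℕ) + d * j) := by rw [hk1eq]; ring
      simp [this, Nat.mul_mod_right]
    have hs1 := hstep k1 t ht1
    rw [if_pos hk1even] at hs1
    obtain ⟨hA1, hB1⟩ := hs1
    have hB1t : B (k1 + 1) t = 2 * B k1 t - A k1 t := by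
      rw [hB1]; simp only [Function.update_self]
    -- second step
    have hk2eq : k1 + 1 = (2 * (t : ℕ) + 1) + (2 * d) * j := by rw [hk1eq]; ring
    have hmod2 : (k1 + 1) % (2 * d) = 2 * (t : ℕ) + 1 := by
      rw [hk2eq, Nat.add_mul_mod_self_left, Nat.mod_eq_of_lt (by omega)]
    have ht2 : (t : ℕ) = ((k1 + 1) % (2 * d)) / 2 := by rw [hmod2]; omega
    have hk2odd : ¬ (k1 + 1) % 2 = 0 := by omega
    have hs2 := hstep (k1 + 1) t ht2
    rw [if_neg hk2odd] at hs2
    obtain ⟨hB2, hA2⟩ := hs2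
    have hA2t : A (k1 + 1 + 1) t = 2 * A (k1 + 1) t - B (k1 + 1) t := by
      rw [hA2]; simp only [Function.update_self]
    -- chain the inequalities
    have hBm : B m t ≤ B k1 t := monoB t (by omega)
    have h1 : 2 * B m t < B (k1 + 1) t := by
      rw [hB1t]
      linarith [(pos k1 t).1]
    have hend : k1 + 1 + 1 ≤ (j + 1) * (2 * d) := by
      have : (j + 1) * (2 * d) = m + 2 * d := by rw [hm]; ring
      omega
    have hBend : B (k1 + 1 + 1) t ≤ B ((j + 1) * (2 * d)) t := monoB t hend
    have hAend : A ((j + 1) * (2 * d)) t ≤ A (k1 + 1 + 1) t := monoA t hend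
    have hBeq : B (k1 + 1 + 1) t = B (k1 + 1) t := by rw [hB2]
    constructor
    · linarith
    · have hAk2 := (pos (k1 + 1) t).1
      have : A (k1 + 1 + 1) t < -(2 * B m t) := by
        rw [hA2t]
        linarith
      linarith
  -- B (j * 2d) t ≥ 2^j * B 0 t
  have main : ∀ j (t : Fin d), 2 ^ j * B 0 t ≤ B (j * (2 * d)) t := by
    intro j t
    induction j with
    | zero => simp
    | succ j ih =>
      have hc := (cycle j t).1
      calc (2 : ℝ) ^ (j + 1) * B 0 t = 2 * (2 ^ j * B 0 t) := by ring
        _ ≤ 2 * B (j * (2 * d)) t := by linarith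
        _ ≤ B ((j + 1) * (2 * d)) t := le_of_lt hc
  have part1 : ∀ j : ℕ, 1 ≤ j → ∀ t,
      A (j * (2 * d)) t < -(2 ^ j * B 0 t) ∧ 2 ^ j * B 0 t < B (j * (2 * d)) t := by
    intro j hj t
    obtain ⟨i, rfl⟩ : ∃ i, j = i + 1 := ⟨j - 1, by omega⟩
    have hc := cycle i t
    have hm := main i t
    have hpow : (2 : ℝ) ^ (i + 1) * B 0 t = 2 * (2 ^ i * B 0 t) := by ring
    constructor
    · have := hc.2
      rw [hpow]
      linarith
    · rw [hpow]
      linarith [hc.1]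
  refine ⟨part1, ?_, ?_⟩
  · intro t
    have hB0 := (h0 t).2
    rw [tendsto_atBot]
    intro b
    obtain ⟨n, hn⟩ := pow_unbounded_of_one_lt (-b / B 0 t) (one_lt_two (α := ℝ))
    have hnb : -b < 2 ^ n * B 0 t := by
      rw [div_lt_iff₀ hB0] at hn
      linarith
    refine eventually_atTop.2 ⟨(n + 1) * (2 * d), fun k hk => ?_⟩
    have h1 := (part1 (n + 1) (by omega) t).1
    have h2 : A k t ≤ A ((n + 1) * (2 * d)) t := monoA t hk
    have hpow : (2 : ℝ) ^ n * B 0 t ≤ 2 ^ (n + 1) * B 0 t := by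
      have : (2 : ℝ) ^ n ≤ 2 ^ (n + 1) := by
        apply pow_le_pow_right₀ (by norm_num)
        omega
      nlinarith
    linarith
  · intro t
    have hB0 := (h0 t).2
    rw [tendsto_atTop]
    intro b
    obtain ⟨n, hn⟩ := pow_unbounded_of_one_lt (b / B 0 t) (one_lt_two (α := ℝ))
    have hnb : b < 2 ^ n * B 0 t := by
      rw [div_lt_iff₀ hB0] at hn
      linarith
    refine eventually_atTop.2 ⟨n * (2 * d), fun k hk => ?_⟩
    have h1 := main n t
    have h2 : B (n * (2 * d)) t ≤ B k t := monoB t hk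
    linarith
end
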